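/- arXiv:2308.11188 — 3 statements merged into one kernel-verified Lean document; each statement's English description precedes it below -/
import Mathlib

section
/- The Jacobi identity θ'(0, τ) = π θ₁(0, τ) θ₂(0, τ) θ₃(0, τ) holds for all τ in the upper half plane, where θ'(0,τ) = ∂θ(v,τ)/∂v |_{v=0}. -/
noncomputable section

open Complex

/-- `q = e^{2πiτ}`. -/
def jq (τ : ℂ) : ℂ := Complex.exp (2 * Real.pi * Complex.I * τ)

/-- The Jacobi theta function
`θ(v,τ) = 2 q^{1/8} sin(πv) ∏_{j≥1} (1−q^j)(1−e^{2πiv}q^j)(1−e^{−2πiv}q^j)`,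
where `q^{1/8} = e^{πiτ/4}`. -/
def jTheta (v τ : ℂ) : ℂ :=
  2 * Complex.exp (Real.pi * Complex.I * τ / 4) * Complex.sin (Real.pi * v) *
    ∏' j : ℕ,
      ((1 - jq τ ^ (j + 1)) *
        (1 - Complex.exp (2 * Real.pi * Complex.I * v) * jq τ ^ (j + 1)) *
        (1 - Complex.exp (-(2 * Real.pi * Complex.I * v)) * jq τ ^ (j + 1)))

/-- `θ₁(v,τ) = 2 q^{1/8} cos(πv) ∏_{j≥1} (1−q^j)(1+e^{2πiv}q^j)(1+e^{−2πiv}q^j)`. -/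
def jTheta1 (v τ : ℂ) : ℂ :=
  2 * Complex.exp (Real.pi * Complex.I * τ / 4) * Complex.cos (Real.pi * v) *
    ∏' j : ℕ,
      ((1 - jq τ ^ (j + 1)) *
        (1 + Complex.exp (2 * Real.pi * Complex.I * v) * jq τ ^ (j + 1)) *
        (1 + Complex.exp (-(2 * Real.pi * Complex.I * v)) * jq τ ^ (j + 1)))

/-- `θ₂(v,τ) = ∏_{j≥1} (1−q^j)(1−e^{2πiv}q^{j−1/2})(1−e^{−2πiv}q^{j−1/2})`,
where `q^{j−1/2} = e^{(2j−1)πiτ}`. -/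
def jTheta2 (v τ : ℂ) : ℂ :=
  ∏' j : ℕ,
    ((1 - jq τ ^ (j + 1)) *
      (1 - Complex.exp (2 * Real.pi * Complex.I * v) *
        Complex.exp ((2 * (j : ℂ) + 1) * Real.pi * Complex.I * τ)) *
      (1 - Complex.exp (-(2 * Real.pi * Complex.I * v)) *
        Complex.exp ((2 * (j : ℂ) + 1) * Real.pi * Complex.I * τ)))

/-- `θ₃(v,τ) = ∏_{j≥1} (1−q^j)(1+e^{2πiv}q^{j−1/2})(1+e^{−2πiv}q^{j−1/2})`. -/
def jTheta3 (v τ : ℂ) : ℂ :=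
  ∏' j : ℕ,
    ((1 - jq τ ^ (j + 1)) *
      (1 + Complex.exp (2 * Real.pi * Complex.I * v) *
        Complex.exp ((2 * (j : ℂ) + 1) * Real.pi * Complex.I * τ)) *
      (1 + Complex.exp (-(2 * Real.pi * Complex.I * v)) *
        Complex.exp ((2 * (j : ℂ) + 1) * Real.pi * Complex.I * τ)))

namespace JacobiAux

open Filter Topology Finset


lemma norm_log_le {z : ℂ} {s : ℝ} (hz : ‖z‖ ≤ s) (hs : s < 1) :
    ‖Complex.log (1 + z)‖ ≤ ((1 - s)⁻¹ / 2 + 1) * ‖z‖ := by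
  have h0 : (0:ℝ) ≤ ‖z‖ := norm_nonneg z
  have h1 : ‖z‖ < 1 := lt_of_le_of_lt hz hs
  have key := Complex.norm_log_one_add_le h1
  have hinv : (1 - ‖z‖)⁻¹ ≤ (1 - s)⁻¹ := by
    apply inv_anti₀ <;> linarith
  have hinv0 : (0:ℝ) < (1 - ‖z‖)⁻¹ := by
    apply inv_pos.2; linarith
  have hsq : ‖z‖ ^ 2 * (1 - ‖z‖)⁻¹ / 2 ≤ ‖z‖ * (1 - s)⁻¹ / 2 := by
    have : ‖z‖ ^ 2 ≤ ‖z‖ := by nlinarith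
    have h2 : ‖z‖ ^ 2 * (1 - ‖z‖)⁻¹ ≤ ‖z‖ * (1 - s)⁻¹ :=
      mul_le_mul this hinv (le_of_lt hinv0) h0
    linarith
  calc ‖Complex.log (1 + z)‖ ≤ ‖z‖ ^ 2 * (1 - ‖z‖)⁻¹ / 2 + ‖z‖ := key
    _ ≤ ‖z‖ * (1 - s)⁻¹ / 2 + ‖z‖ := by linarith
    _ = ((1 - s)⁻¹ / 2 + 1) * ‖z‖ := by ring

lemma summable_log {a : ℕ → ℂ} (ha : Summable fun j => ‖a j‖) :
    Summable fun j => Complex.log (1 + a j) := by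
  apply Summable.of_norm_bounded_eventually_nat (g := fun j => (3/2) * ‖a j‖) (ha.mul_left _)
  have h2 : ∀ᶠ j in atTop, ‖a j‖ ≤ 1/2 :=
    ha.tendsto_atTop_zero.eventually_le_const (by norm_num)
  filter_upwards [h2] with j hj
  exact Complex.norm_log_one_add_half_le_self hj

lemma exp_tsum_log {a : ℕ → ℂ} (ha : Summable fun j => ‖a j‖) (h0 : ∀ j, 1 + a j ≠ 0) :
    Complex.exp (∑' j, Complex.log (1 + a j)) = ∏' j, (1 + a j) :=
  Complex.cexp_tsum_eq_tprod (f := fun j => 1 + a j) h0 (summable_log ha)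

lemma multipliable_one_add {a : ℕ → ℂ} (ha : Summable fun j => ‖a j‖)
    (h0 : ∀ j, 1 + a j ≠ 0) : Multipliable fun j => 1 + a j :=
  Complex.multipliable_of_summable_log (f := fun j => 1 + a j) (summable_log ha)

lemma tprod_ne_zero {a : ℕ → ℂ} (ha : Summable fun j => ‖a j‖) (h0 : ∀ j, 1 + a j ≠ 0) :
    (∏' j, (1 + a j)) ≠ 0 := by
  rw [← exp_tsum_log ha h0]; exact Complex.exp_ne_zero _

lemma one_sub_ne {u : ℂ} (h : ‖u‖ < 1) : 1 - u ≠ 0 := by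
  intro hc
  have : u = 1 := by linear_combination -hc
  rw [this] at h; simp at h

lemma summable_geom {t : ℂ} (ht : ‖t‖ < 1) (w : ℂ) :
    Summable fun j : ℕ => ‖-(w * t ^ (j + 1))‖ := by
  have h := (summable_geometric_of_lt_one (norm_nonneg t) ht).mul_left (‖w‖ * ‖t‖)
  apply h.congr
  intro j
  simp [norm_mul, norm_pow, pow_succ]
  ring

lemma std_ne {t w : ℂ} (ht : ‖t‖ < 1) (hw : ‖w‖ * ‖t‖ < 1) (j : ℕ) :
    (1 : ℂ) - w * t ^ (j + 1) ≠ 0 := by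
  apply one_sub_ne
  rw [norm_mul, norm_pow, pow_succ']
  calc ‖w‖ * (‖t‖ * ‖t‖ ^ j) = (‖w‖ * ‖t‖) * ‖t‖ ^ j := by ring
    _ ≤ (‖w‖ * ‖t‖) * 1 := by
        apply mul_le_mul_of_nonneg_left (pow_le_one₀ (norm_nonneg t) ht.le)
          (mul_nonneg (norm_nonneg w) (norm_nonneg t))
    _ < 1 := by rwa [mul_one]

lemma sub_eq_add (w t : ℂ) (j : ℕ) :
    (1 : ℂ) - w * t ^ (j + 1) = 1 + -(w * t ^ (j + 1)) := by ring

lemma multipliable_std {t w : ℂ} (ht : ‖t‖ < 1) (hw : ‖w‖ * ‖t‖ < 1) :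
    Multipliable fun j : ℕ => 1 - w * t ^ (j + 1) := by
  have := multipliable_one_add (summable_geom ht w)
    (fun j => (sub_eq_add w t j) ▸ std_ne ht hw j)
  exact this.congr fun j => (sub_eq_add w t j).symm

lemma std_tprod_ne_zero {t w : ℂ} (ht : ‖t‖ < 1) (hw : ‖w‖ * ‖t‖ < 1) :
    (∏' j : ℕ, (1 - w * t ^ (j + 1))) ≠ 0 := by
  have h1 : (∏' j : ℕ, (1 - w * t ^ (j + 1))) = ∏' j : ℕ, (1 + -(w * t ^ (j + 1))) :=
    tprod_congr (sub_eq_add w t)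
  rw [h1]
  exact tprod_ne_zero (summable_geom ht w) (fun j => (sub_eq_add w t j) ▸ std_ne ht hw j)

lemma std_exp_eq {t w : ℂ} (ht : ‖t‖ < 1) (hw : ‖w‖ * ‖t‖ < 1) :
    Complex.exp (∑' j : ℕ, Complex.log (1 - w * t ^ (j + 1))) =
      ∏' j : ℕ, (1 - w * t ^ (j + 1)) := by
  have h1 : (∏' j : ℕ, (1 - w * t ^ (j + 1))) = ∏' j : ℕ, (1 + -(w * t ^ (j + 1))) :=
    tprod_congr (sub_eq_add w t)
  have h2 : (∑' j : ℕ, Complex.log (1 - w * t ^ (j + 1))) =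
      ∑' j : ℕ, Complex.log (1 + -(w * t ^ (j + 1))) :=
    tsum_congr fun j => by rw [sub_eq_add]
  rw [h1, h2]
  exact exp_tsum_log (summable_geom ht w) (fun j => (sub_eq_add w t j) ▸ std_ne ht hw j)

lemma contAt_std {t : ℂ} (ht : ‖t‖ < 1) (ht0 : t ≠ 0) :
    ContinuousAt (fun w : ℂ => ∏' j : ℕ, (1 - w * t ^ (j + 1))) 1 := by
  have htpos : 0 < ‖t‖ := norm_pos_iff.2 ht0
  set r : ℝ := (1 + ‖t‖) / 2 with hr
  have hr1 : r < 1 := by rw [hr]; linarith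
  have htr : ‖t‖ < r := by rw [hr]; linarith
  have hr0 : 0 < r := by rw [hr]; linarith [htpos]
  set R : ℝ := r / ‖t‖ with hRdef
  have hR1 : 1 < R := (one_lt_div htpos).2 htr
  have hRt : R * ‖t‖ = r := div_mul_cancel₀ r htpos.ne'
  set S : Set ℂ := Metric.ball (0 : ℂ) R with hS
  have hSopen : IsOpen S := Metric.isOpen_ball
  have h1S : (1 : ℂ) ∈ S := by
    simp only [hS, Metric.mem_ball, dist_zero_right, norm_one]
    exact hR1
  have hSnhds : S ∈ 𝓝 (1 : ℂ) := hSopen.mem_nhds h1S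
  have hwt : ∀ w ∈ S, ‖w‖ * ‖t‖ < 1 := by
    intro w hw
    simp only [hS, Metric.mem_ball, dist_zero_right] at hw
    calc ‖w‖ * ‖t‖ < R * ‖t‖ := mul_lt_mul_of_pos_right hw htpos
      _ = r := hRt
      _ < 1 := hr1
  have hbd : ∀ (j : ℕ), ∀ w ∈ S, ‖-(w * t ^ (j + 1))‖ ≤ r * ‖t‖ ^ j := by
    intro j w hw
    simp only [hS, Metric.mem_ball, dist_zero_right] at hw
    rw [norm_neg, norm_mul, norm_pow, pow_succ']
    calc ‖w‖ * (‖t‖ * ‖t‖ ^ j) = (‖w‖ * ‖t‖) * ‖t‖ ^ j := by ring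
      _ ≤ (R * ‖t‖) * ‖t‖ ^ j := by
          apply mul_le_mul_of_nonneg_right (mul_le_mul_of_nonneg_right hw.le htpos.le)
            (pow_nonneg (norm_nonneg t) j)
      _ = r * ‖t‖ ^ j := by rw [hRt]
  have hcontg : ContinuousOn (fun w : ℂ => ∑' j : ℕ, Complex.log (1 - w * t ^ (j + 1))) S := by
    apply continuousOn_tsum (u := fun j : ℕ => ((1 - r)⁻¹ / 2 + 1) * (r * ‖t‖ ^ j))
    · intro j w hw
      apply ContinuousAt.continuousWithinAt
      apply ContinuousAt.comp (continuousAt_clog ?_) (by fun_prop)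
      have h1 : (1 : ℂ) - w * t ^ (j + 1) = 1 + -(w * t ^ (j + 1)) := by ring
      rw [h1]
      apply Complex.mem_slitPlane_of_norm_lt_one
      calc ‖-(w * t ^ (j + 1))‖ ≤ r * ‖t‖ ^ j := hbd j w hw
        _ ≤ r * 1 := mul_le_mul_of_nonneg_left (pow_le_one₀ (norm_nonneg t) ht.le) hr0.le
        _ < 1 := by rwa [mul_one]
    · exact ((summable_geometric_of_lt_one (norm_nonneg t) ht).mul_left r).mul_left _
    · intro j w hw
      have h1 : (1 : ℂ) - w * t ^ (j + 1) = 1 + -(w * t ^ (j + 1)) := by ring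
      rw [h1]
      have hle : ‖-(w * t ^ (j + 1))‖ ≤ r * ‖t‖ ^ j := hbd j w hw
      have hle' : ‖-(w * t ^ (j + 1))‖ ≤ r := by
        calc ‖-(w * t ^ (j + 1))‖ ≤ r * ‖t‖ ^ j := hle
          _ ≤ r * 1 := mul_le_mul_of_nonneg_left (pow_le_one₀ (norm_nonneg t) ht.le) hr0.le
          _ = r := mul_one r
      calc ‖Complex.log (1 + -(w * t ^ (j + 1)))‖
          ≤ ((1 - r)⁻¹ / 2 + 1) * ‖-(w * t ^ (j + 1))‖ := norm_log_le hle' hr1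
        _ ≤ ((1 - r)⁻¹ / 2 + 1) * (r * ‖t‖ ^ j) := by
            apply mul_le_mul_of_nonneg_left hle
            have : (0:ℝ) < (1 - r)⁻¹ := inv_pos.2 (by linarith)
            linarith
  have hexp : ContinuousAt
      (fun w : ℂ => Complex.exp (∑' j : ℕ, Complex.log (1 - w * t ^ (j + 1)))) 1 :=
    Complex.continuous_exp.continuousAt.comp (hcontg.continuousAt hSnhds)
  apply hexp.congr
  filter_upwards [hSnhds] with w hw
  exact (std_exp_eq ht (hwt w hw))

lemma prod_split {q : ℂ} (n : ℕ) :
    (∏ j ∈ range n, (1 + q ^ (j + 1))) * (∏ j ∈ range n, (1 - q ^ (2 * j + 1))) *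
      (∏ j ∈ range n, (1 - q ^ (j + 1))) = ∏ j ∈ range (2 * n), (1 - q ^ (j + 1)) := by
  induction n with
  | zero => simp
  | succ n ih =>
    have h2 : 2 * (n + 1) = (2 * n) + 1 + 1 := by ring
    rw [prod_range_succ, prod_range_succ, prod_range_succ, h2, prod_range_succ,
      prod_range_succ, ← ih]
    ring

lemma hodd_eq {q : ℂ} (hq0 : q ≠ 0) (j : ℕ) :
    (1 : ℂ) - q⁻¹ * (q ^ 2) ^ (j + 1) = 1 - q ^ (2 * j + 1) := by
  congr 1
  rw [← pow_mul]
  have h : 2 * (j + 1) = (2 * j + 1) + 1 := by ring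
  rw [h, pow_succ, mul_comm, mul_assoc, mul_inv_cancel₀ hq0, mul_one]

lemma euler {q : ℂ} (hq : ‖q‖ < 1) (hq0 : q ≠ 0) :
    (∏' j : ℕ, (1 + q ^ (j + 1))) * (∏' j : ℕ, (1 - q ^ (2 * j + 1))) = 1 := by
  have hqn : 0 < ‖q‖ := norm_pos_iff.2 hq0
  have hq2 : ‖q ^ 2‖ < 1 := by rw [norm_pow]; nlinarith
  have hw' : ‖q⁻¹‖ * ‖q ^ 2‖ < 1 := by
    rw [norm_inv, norm_pow]
    calc ‖q‖⁻¹ * ‖q‖ ^ 2 = ‖q‖ := by rw [sq]; field_simp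
      _ < 1 := hq
  have hB : Multipliable fun j : ℕ => 1 + q ^ (j + 1) := by
    have := multipliable_std (t := q) (w := -1) hq (by simpa using hq)
    exact this.congr fun j => by ring
  have hO : Multipliable fun j : ℕ => 1 - q ^ (2 * j + 1) := by
    have := multipliable_std (t := q ^ 2) (w := q⁻¹) hq2 hw'
    exact this.congr fun j => hodd_eq hq0 j
  have hA : Multipliable fun j : ℕ => 1 - q ^ (j + 1) := by
    have := multipliable_std (t := q) (w := 1) hq (by simpa using hq)
    exact this.congr fun j => by ring
  have hAne : (∏' j : ℕ, (1 - q ^ (j + 1))) ≠ 0 := by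
    have h1 : (∏' j : ℕ, (1 - q ^ (j + 1))) = ∏' j : ℕ, (1 - 1 * q ^ (j + 1)) :=
      tprod_congr fun j => by ring
    rw [h1]
    exact std_tprod_ne_zero hq (by simpa using hq)
  have tB := hB.hasProd.tendsto_prod_nat
  have tO := hO.hasProd.tendsto_prod_nat
  have tA := hA.hasProd.tendsto_prod_nat
  have t2 : Tendsto (fun n : ℕ => 2 * n) atTop atTop :=
    Filter.tendsto_atTop_atTop.2 fun b => ⟨b, fun a ha => by omega⟩
  have tA2 := tA.comp t2
  have tLHS := (tB.mul tO).mul tA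
  have heq : (fun n : ℕ =>
      (∏ j ∈ range n, (1 + q ^ (j + 1))) * (∏ j ∈ range n, (1 - q ^ (2 * j + 1))) *
        (∏ j ∈ range n, (1 - q ^ (j + 1)))) =
      fun n : ℕ => ∏ j ∈ range (2 * n), (1 - q ^ (j + 1)) := funext fun n => prod_split n
  rw [heq] at tLHS
  have hkey : (∏' j : ℕ, (1 + q ^ (j + 1))) * (∏' j : ℕ, (1 - q ^ (2 * j + 1))) *
      (∏' j : ℕ, (1 - q ^ (j + 1))) = ∏' j : ℕ, (1 - q ^ (j + 1)) :=
    tendsto_nhds_unique tLHS tA2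
  exact mul_right_cancel₀ hAne (hkey.trans (one_mul _).symm)

lemma split3 (f g h : ℕ → ℂ) (hf : Multipliable f) (hg : Multipliable g)
    (hh : Multipliable h) :
    ∏' j : ℕ, (f j * g j * h j) = (∏' j, f j) * (∏' j, g j) * (∏' j, h j) := by
  rw [Multipliable.tprod_mul (hf.mul hg) hh, Multipliable.tprod_mul hf hg]

end JacobiAux

open JacobiAux Filter Topology

theorem jacobi_identity (τ : ℂ) (hτ : 0 < τ.im) :
    deriv (fun v => jTheta v τ) 0 =
      Real.pi * jTheta1 0 τ * jTheta2 0 τ * jTheta3 0 τ := by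
  -- basic quantities
  set x : ℂ := Complex.exp (Real.pi * Complex.I * τ) with hxdef
  have hx0 : x ≠ 0 := Complex.exp_ne_zero _
  have hxre : (Real.pi * Complex.I * τ).re = -(Real.pi * τ.im) := by
    simp [Complex.mul_re, Complex.mul_im]
  have hxnorm : ‖x‖ < 1 := by
    rw [hxdef, Complex.norm_exp, hxre]
    rw [Real.exp_lt_one_iff]
    have := Real.pi_pos
    nlinarith
  have hxq : jq τ = x ^ 2 := by
    rw [hxdef, jq, ← Complex.exp_nat_mul]
    congr 1
    push_cast
    ring
  have hq0 : jq τ ≠ 0 := Complex.exp_ne_zero _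
  have hqx : ‖jq τ‖ = ‖x‖ ^ 2 := by rw [hxq, norm_pow]
  have hq : ‖jq τ‖ < 1 := by
    rw [hqx]; nlinarith [norm_nonneg x]
  have hxinv : ‖x⁻¹‖ * ‖jq τ‖ < 1 := by
    rw [norm_inv, hqx]
    have : ‖x‖⁻¹ * ‖x‖ ^ 2 = ‖x‖ := by rw [sq]; field_simp
    rw [this]; exact hxnorm
  have hxpos : 0 < ‖x‖ := norm_pos_iff.2 hx0
  -- the standard product function
  set Φ : ℂ → ℂ := fun w => ∏' j : ℕ, (1 - w * jq τ ^ (j + 1)) with hΦ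
  set K : ℂ := 2 * Complex.exp (Real.pi * Complex.I * τ / 4) with hK
  set A : ℂ := Φ 1 with hA
  -- exp((2j+1)πiτ) = x⁻¹ q^(j+1)
  have hE : ∀ j : ℕ, Complex.exp ((2 * (j : ℂ) + 1) * Real.pi * Complex.I * τ)
      = x⁻¹ * jq τ ^ (j + 1) := by
    intro j
    have h1 : (2 * (j : ℂ) + 1) * Real.pi * Complex.I * τ =
        ((2 * j + 1 : ℕ) : ℂ) * (Real.pi * Complex.I * τ) := by push_cast; ring
    rw [h1, Complex.exp_nat_mul, ← hxdef, hxq]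
    rw [← pow_mul]
    have h2 : 2 * (j + 1) = (2 * j + 1) + 1 := by ring
    rw [h2]
    field_simp
    ring
  -- multipliability
  have hone : ‖(1:ℂ)‖ * ‖jq τ‖ < 1 := by simpa using hq
  have hnegone : ‖(-1:ℂ)‖ * ‖jq τ‖ < 1 := by simpa using hq
  have hnegxinv : ‖-x⁻¹‖ * ‖jq τ‖ < 1 := by rwa [norm_neg]
  have mA : Multipliable fun j : ℕ => 1 - jq τ ^ (j + 1) :=
    (multipliable_std hq hone).congr fun j => by ring
  -- value of A
  have hAeq : (∏' j : ℕ, (1 - jq τ ^ (j + 1))) = A := tprod_congr fun j => by rw [one_mul]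
  have hAne : A ≠ 0 := std_tprod_ne_zero hq hone
  -- derivative computation
  have hf0 : jTheta 0 τ = 0 := by
    rw [jTheta]
    simp
  -- the open set where splitting applies
  set S : Set ℂ := {v : ℂ | ‖Complex.exp (2 * Real.pi * Complex.I * v)‖ * ‖jq τ‖ < 1 ∧
      ‖Complex.exp (-(2 * Real.pi * Complex.I * v))‖ * ‖jq τ‖ < 1} with hSdef
  have hSopen : IsOpen S := by
    have c1 : Continuous fun v : ℂ => ‖Complex.exp (2 * Real.pi * Complex.I * v)‖ * ‖jq τ‖ := by
      fun_prop
    have c2 : Continuous fun v : ℂ =>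
        ‖Complex.exp (-(2 * Real.pi * Complex.I * v))‖ * ‖jq τ‖ := by fun_prop
    exact (isOpen_lt c1 continuous_const).inter (isOpen_lt c2 continuous_const)
  have habs : ‖jq τ‖ < 1 := hq
  have hS0 : (0 : ℂ) ∈ S := by
    constructor <;> simpa using habs
  have hSnhds : S ∈ 𝓝 (0 : ℂ) := hSopen.mem_nhds hS0
  have hsplit : ∀ v ∈ S, jTheta v τ =
      K * Complex.sin (Real.pi * v) *
        (A * Φ (Complex.exp (2 * Real.pi * Complex.I * v)) *
          Φ (Complex.exp (-(2 * Real.pi * Complex.I * v)))) := by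
    intro v hv
    rw [jTheta, ← hK]
    congr 1
    rw [split3 _ _ _ mA (multipliable_std hq hv.1) (multipliable_std hq hv.2), hAeq]
  -- slope limit
  have hsinlim : Tendsto (fun v : ℂ => Complex.sin (Real.pi * v) / v) (𝓝[≠] (0:ℂ))
      (𝓝 (Real.pi : ℂ)) := by
    have h1 : HasDerivAt (fun v : ℂ => Complex.sin (Real.pi * v)) (Real.pi : ℂ) 0 := by
      have h2 : HasDerivAt (fun v : ℂ => (Real.pi : ℂ) * v) (Real.pi : ℂ) 0 := by
        simpa using (hasDerivAt_id (0:ℂ)).const_mul ((Real.pi : ℂ))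
      have h3 := (Complex.hasDerivAt_sin ((Real.pi : ℂ) * 0)).comp 0 h2
      simpa [Function.comp_def] using h3
    have h4 := hasDerivAt_iff_tendsto_slope.1 h1
    apply h4.congr
    intro v
    rw [slope_def_field]
    simp
  have hcontΦ : ∀ c : ℂ, Tendsto (fun v : ℂ => Φ (Complex.exp (c * v))) (𝓝 (0:ℂ)) (𝓝 A) := by
    intro c
    have h1 : Tendsto (fun v : ℂ => Complex.exp (c * v)) (𝓝 (0:ℂ)) (𝓝 (1:ℂ)) := by
      have hc : Continuous (fun v : ℂ => Complex.exp (c * v)) := by fun_prop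
      have h2 := hc.tendsto (0:ℂ)
      simpa using h2
    exact ((contAt_std hq hq0).tendsto).comp h1
  have hALim : Tendsto (fun v : ℂ => K * (A * Φ (Complex.exp (2 * Real.pi * Complex.I * v)) *
      Φ (Complex.exp (-(2 * Real.pi * Complex.I * v))))) (𝓝 (0:ℂ)) (𝓝 (K * (A * A * A))) := by
    have h2 : Tendsto (fun v : ℂ => Φ (Complex.exp (2 * Real.pi * Complex.I * v)))
        (𝓝 (0:ℂ)) (𝓝 A) := hcontΦ (2 * Real.pi * Complex.I)
    have h3 : Tendsto (fun v : ℂ => Φ (Complex.exp (-(2 * Real.pi * Complex.I * v))))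
        (𝓝 (0:ℂ)) (𝓝 A) := by
      have := hcontΦ (-(2 * Real.pi * Complex.I))
      apply this.congr
      intro v; congr 1; ring
    exact tendsto_const_nhds.mul ((tendsto_const_nhds.mul h2).mul h3)
  have hD : HasDerivAt (fun v => jTheta v τ) ((Real.pi : ℂ) * (K * (A * A * A))) 0 := by
    rw [hasDerivAt_iff_tendsto_slope]
    have heq : (fun v : ℂ => (Complex.sin (Real.pi * v) / v) *
        (K * (A * Φ (Complex.exp (2 * Real.pi * Complex.I * v)) *
          Φ (Complex.exp (-(2 * Real.pi * Complex.I * v))))))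
        =ᶠ[𝓝[≠] (0:ℂ)] slope (fun v => jTheta v τ) 0 := by
      filter_upwards [eventually_mem_nhdsWithin,
        eventually_nhdsWithin_of_eventually_nhds (eventually_of_mem hSnhds fun v hv => hv)]
        with v hv hvS
      rw [slope_def_field, hf0, sub_zero, sub_zero, hsplit v hvS]
      ring
    apply Tendsto.congr' heq
    exact hsinlim.mul (hALim.mono_left nhdsWithin_le_nhds)
  rw [hD.deriv]
  -- now evaluate the right-hand side
  have hvB : jTheta1 0 τ = K * (A * Φ (-1) * Φ (-1)) := by
    rw [jTheta1, ← hK]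
    simp only [mul_zero, neg_zero, Complex.exp_zero, Complex.cos_zero, one_mul, mul_one]
    congr 1
    have : ∀ j : ℕ, (1 - jq τ ^ (j + 1)) * (1 + jq τ ^ (j + 1)) * (1 + jq τ ^ (j + 1)) =
        (1 - jq τ ^ (j + 1)) * (1 - (-1) * jq τ ^ (j + 1)) * (1 - (-1) * jq τ ^ (j + 1)) := by
      intro j; ring
    rw [tprod_congr this,
      split3 _ _ _ mA (multipliable_std hq hnegone) (multipliable_std hq hnegone), hAeq]
  have hv2 : jTheta2 0 τ = A * Φ x⁻¹ * Φ x⁻¹ := by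
    rw [jTheta2]
    simp only [mul_zero, neg_zero, Complex.exp_zero, one_mul]
    have : ∀ j : ℕ, (1 - jq τ ^ (j + 1)) *
        (1 - Complex.exp ((2 * (j : ℂ) + 1) * Real.pi * Complex.I * τ)) *
        (1 - Complex.exp ((2 * (j : ℂ) + 1) * Real.pi * Complex.I * τ)) =
        (1 - jq τ ^ (j + 1)) * (1 - x⁻¹ * jq τ ^ (j + 1)) * (1 - x⁻¹ * jq τ ^ (j + 1)) := by
      intro j; rw [hE j]
    rw [tprod_congr this,
      split3 _ _ _ mA (multipliable_std hq hxinv) (multipliable_std hq hxinv), hAeq]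
  have hv3 : jTheta3 0 τ = A * Φ (-x⁻¹) * Φ (-x⁻¹) := by
    rw [jTheta3]
    simp only [mul_zero, neg_zero, Complex.exp_zero, one_mul]
    have : ∀ j : ℕ, (1 - jq τ ^ (j + 1)) *
        (1 + Complex.exp ((2 * (j : ℂ) + 1) * Real.pi * Complex.I * τ)) *
        (1 + Complex.exp ((2 * (j : ℂ) + 1) * Real.pi * Complex.I * τ)) =
        (1 - jq τ ^ (j + 1)) * (1 - (-x⁻¹) * jq τ ^ (j + 1)) *
          (1 - (-x⁻¹) * jq τ ^ (j + 1)) := by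
      intro j; rw [hE j]; ring
    rw [tprod_congr this,
      split3 _ _ _ mA (multipliable_std hq hnegxinv) (multipliable_std hq hnegxinv), hAeq]
  rw [hvB, hv2, hv3]
  -- Euler's identity: Φ(-1) * (Φ(x⁻¹) * Φ(-x⁻¹)) = 1
  have hOO : Φ x⁻¹ * Φ (-x⁻¹) = ∏' j : ℕ, (1 - jq τ ^ (2 * j + 1)) := by
    rw [hΦ, ← Multipliable.tprod_mul (multipliable_std hq hxinv) (multipliable_std hq hnegxinv)]
    apply tprod_congr
    intro j
    have hsq : x⁻¹ * jq τ ^ (j + 1) * (x⁻¹ * jq τ ^ (j + 1)) = jq τ ^ (2 * j + 1) := by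
      have h1 : x⁻¹ * x⁻¹ = (jq τ)⁻¹ := by rw [hxq]; rw [sq]; rw [mul_inv]
      have h2 : jq τ ^ (j + 1) * jq τ ^ (j + 1) = jq τ ^ (2 * j + 1) * jq τ := by
        rw [← pow_add, ← pow_succ]
        congr 1
        ring
      calc x⁻¹ * jq τ ^ (j + 1) * (x⁻¹ * jq τ ^ (j + 1))
          = (x⁻¹ * x⁻¹) * (jq τ ^ (j + 1) * jq τ ^ (j + 1)) := by ring
        _ = (jq τ)⁻¹ * (jq τ ^ (2 * j + 1) * jq τ) := by rw [h1, h2]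
        _ = jq τ ^ (2 * j + 1) * ((jq τ)⁻¹ * jq τ) := by ring
        _ = jq τ ^ (2 * j + 1) := by rw [inv_mul_cancel₀ hq0, mul_one]
    linear_combination -hsq
  have hBeq : (∏' j : ℕ, (1 + jq τ ^ (j + 1))) = Φ (-1) :=
    tprod_congr fun j => by ring
  have hEuler : Φ (-1) * (Φ x⁻¹ * Φ (-x⁻¹)) = 1 := by
    rw [hOO, ← hBeq]
    exact euler hq hq0
  have hu2 : (Φ (-1) * (Φ x⁻¹ * Φ (-x⁻¹))) ^ 2 = 1 := by rw [hEuler]; ring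
  linear_combination (-((Real.pi : ℂ) * K * A * A * A)) * hu2
end
end

section
/- Let T = (1 1; 0 1) and S = (0 −1; 1 0). Then Γ₀(2) = {γ = (a b; c d) ∈ SL₂(ℤ) : c ≡ 0 mod 2} is a subgroup of SL₂(ℤ) generated by T and ST²ST. -/
open Matrix ModularGroup

private def Uu : SpecialLinearGroup (Fin 2) ℤ := S * T ^ 2 * S * T

private lemma coe_Uu : (Uu : Matrix (Fin 2) (Fin 2) ℤ) = !![-1,-1;2,1] := by
  have h2 : (T^2 : SpecialLinearGroup (Fin 2) ℤ) = T * T := sq T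
  simp only [Uu, h2, SpecialLinearGroup.coe_mul, coe_S, coe_T]
  norm_num [Matrix.mul_fin_two]

private lemma coe_TUu : ((T * Uu : SpecialLinearGroup (Fin 2) ℤ) : Matrix (Fin 2) (Fin 2) ℤ) = !![1,0;2,1] := by
  simp only [Matrix.SpecialLinearGroup.coe_mul, coe_Uu, coe_T]
  norm_num [Matrix.mul_fin_two]

private lemma coe_Sinv : ((S⁻¹ : SpecialLinearGroup (Fin 2) ℤ) : Matrix (Fin 2) (Fin 2) ℤ) = !![0,1;-1,0] := by
  rw [SpecialLinearGroup.SL2_inv_expl]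
  ext i j
  fin_cases i <;> fin_cases j <;> simp [coe_S]

private lemma TUu_eq : (T * Uu : SpecialLinearGroup (Fin 2) ℤ) = S * T ^ (-2 : ℤ) * S⁻¹ := by
  apply Subtype.ext
  simp only [Matrix.SpecialLinearGroup.coe_mul, coe_T_zpow, coe_S, coe_Sinv, coe_T, coe_Uu]
  norm_num [Matrix.mul_fin_two]

private lemma coe_TUu_zpow (m : ℤ) :
    (((T * Uu) ^ m : SpecialLinearGroup (Fin 2) ℤ) : Matrix (Fin 2) (Fin 2) ℤ) = !![1,0;2*m,1] := by
  rw [TUu_eq, conj_zpow, ← _root_.zpow_mul]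
  simp only [Matrix.SpecialLinearGroup.coe_mul, coe_T_zpow, coe_S, coe_Sinv]
  norm_num [Matrix.mul_fin_two, mul_comm]

private abbrev Hgrp : Subgroup (SpecialLinearGroup (Fin 2) ℤ) :=
  Subgroup.closure {T, S * T ^ 2 * S * T}

private lemma hT_mem : T ∈ Hgrp := Subgroup.subset_closure (Set.mem_insert _ _)
private lemma hU_mem : Uu ∈ Hgrp := Subgroup.subset_closure (Set.mem_insert_of_mem _ rfl)

private lemma key (k : ℕ) : ∀ γ : SpecialLinearGroup (Fin 2) ℤ,
    (γ.1 1 0).natAbs = k → γ.1 1 0 % 2 = 0 → γ ∈ Hgrp := by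
  induction k using Nat.strong_induction_on with
  | _ k ih =>
  intro γ hk hpar
  set a := γ.1 0 0 with ha
  set b := γ.1 0 1 with hb
  set c := γ.1 1 0 with hc
  set d := γ.1 1 1 with hd
  have hγ : (γ : Matrix (Fin 2) (Fin 2) ℤ) = !![a,b;c,d] := by
    ext i j; fin_cases i <;> fin_cases j <;> rfl
  have hdet : a * d - b * c = 1 := by
    have h2 := γ.2
    rwa [Matrix.det_fin_two] at h2
  by_cases hc0 : c = 0
  · rw [hc0, mul_zero, sub_zero, Int.mul_eq_one_iff_eq_one_or_neg_one] at hdet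
    rcases hdet with ⟨h1, h2⟩ | ⟨h1, h2⟩
    · have : γ = T ^ b := by
        apply Subtype.ext
        rw [coe_T_zpow, hγ, h1, h2, hc0]
      rw [this]; exact zpow_mem hT_mem b
    · have : γ = Uu * Uu * T ^ (-b) := by
        apply Subtype.ext
        rw [Matrix.SpecialLinearGroup.coe_mul, Matrix.SpecialLinearGroup.coe_mul, coe_Uu, coe_T_zpow,
          hγ, h1, h2, hc0]
        norm_num [Matrix.mul_fin_two]
      rw [this]
      exact mul_mem (mul_mem hU_mem hU_mem) (zpow_mem hT_mem (-b))
  · -- c ≠ 0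
    have hbc : (b * c) % 2 = 0 := by rw [Int.mul_emod, hpar, mul_zero]; rfl
    have had : (a * d) % 2 = 1 := by omega
    have ha2 : a % 2 = 1 := by
      rcases Int.emod_two_eq a with h | h
      · exfalso
        have : (a * d) % 2 = 0 := by rw [Int.mul_emod, h, zero_mul]; rfl
        omega
      · exact h
    set n : ℤ := -(a / c) with hn
    set γ₁ : SpecialLinearGroup (Fin 2) ℤ := T ^ n * γ with hγ₁def
    set a' : ℤ := a % c with ha'
    have hγ₁00 : γ₁.1 0 0 = a' := by
      rw [hγ₁def, Matrix.SpecialLinearGroup.coe_mul, coe_T_zpow, hγ]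
      simp [Matrix.mul_apply, Fin.sum_univ_two, ha', hn, Int.emod_def]
      ring
    have hγ₁10 : γ₁.1 1 0 = c := by
      rw [hγ₁def, Matrix.SpecialLinearGroup.coe_mul, coe_T_zpow, hγ]
      simp [Matrix.mul_apply, Fin.sum_univ_two]
    have ha'0 : 0 ≤ a' := Int.emod_nonneg a hc0
    have ha'lt : a' < (c.natAbs : ℤ) := by
      have := Int.emod_lt_abs a hc0
      rwa [Int.abs_eq_natAbs] at this
    have ha'2 : a' % 2 = 1 := by
      rw [ha', Int.emod_emod_of_dvd a (by omega : (2:ℤ) ∣ c)]; exact ha2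
    have ha'pos : 0 < a' := by omega
    set m : ℤ := -((c + a') / (2 * a')) with hm
    set c' : ℤ := (c + a') % (2 * a') - a' with hc'
    have hc'eq : c' = c + 2 * a' * m := by
      have := Int.emod_add_mul_ediv (c + a') (2 * a')
      rw [hc', hm]; linarith [this]
    have hr0 : 0 ≤ (c + a') % (2 * a') := Int.emod_nonneg _ (by positivity)
    have hrlt : (c + a') % (2 * a') < 2 * a' := Int.emod_lt_of_pos _ (by positivity)
    have hc'par : c' % 2 = 0 := by
      have h := hc'eq
      have : c' = c + 2 * (a' * m) := by linarith [h]
      omega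
    have hc'lt : c'.natAbs < c.natAbs := by
      -- |c'| ≤ a' with c' ≠ -a' by parity, and a' < |c|
      have h1 : -a' ≤ c' := by omega
      have h2 : c' < a' := by omega
      have h3 : c' ≠ -a' := by omega
      omega
    set γ₂ : SpecialLinearGroup (Fin 2) ℤ := (T * Uu) ^ m * γ₁ with hγ₂def
    have hγ₂10 : γ₂.1 1 0 = c' := by
      rw [hγ₂def, Matrix.SpecialLinearGroup.coe_mul, coe_TUu_zpow]
      simp [Matrix.mul_apply, Fin.sum_univ_two, hγ₁00, hγ₁10]
      linarith [hc'eq]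
    have hmem₂ : γ₂ ∈ Hgrp := by
      apply ih c'.natAbs (by rw [← hk]; exact hc'lt) γ₂ (by rw [hγ₂10]) (by rw [hγ₂10]; exact hc'par)
    have hγeq : γ = (T ^ n)⁻¹ * (((T * Uu) ^ m)⁻¹ * γ₂) := by
      rw [hγ₂def, hγ₁def]; group
    rw [hγeq]
    exact mul_mem (inv_mem (zpow_mem hT_mem n))
      (mul_mem (inv_mem (zpow_mem (mul_mem hT_mem hU_mem) m)) hmem₂)

/-- `Γ₀(2) = {γ ∈ SL₂(ℤ) : c ≡ 0 (mod 2)}` is the subgroup of `SL₂(ℤ)` generated by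
`T = (1 1; 0 1)` and `ST²ST`, where `S = (0 −1; 1 0)`: a matrix `γ ∈ SL₂(ℤ)` lies in the
subgroup generated by `T` and `ST²ST` if and only if its lower-left entry is even. -/
theorem gamma0_two_generated_by_T_and_ST2ST :
    ∀ γ : Matrix.SpecialLinearGroup (Fin 2) ℤ,
      γ ∈ Subgroup.closure {ModularGroup.T, ModularGroup.S * ModularGroup.T ^ 2 *
        ModularGroup.S * ModularGroup.T} ↔ γ.1 1 0 % 2 = 0 := by
  intro γ
  constructor
  · intro h
    have hle : Hgrp ≤ CongruenceSubgroup.Gamma0 2 := by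
      rw [Subgroup.closure_le]
      rintro x hx
      rcases hx with rfl | hx
      · rw [SetLike.mem_coe, CongruenceSubgroup.Gamma0_mem, coe_T]
        norm_num
      · rcases hx with rfl
        rw [SetLike.mem_coe, CongruenceSubgroup.Gamma0_mem]
        have h2 : (S * T ^ 2 * S * T : SpecialLinearGroup (Fin 2) ℤ).1 1 0 = 2 := by
          rw [show (S * T ^ 2 * S * T : SpecialLinearGroup (Fin 2) ℤ) = Uu from rfl, coe_Uu]
          norm_num
        rw [h2]; decide
    have := hle h
    rw [CongruenceSubgroup.Gamma0_mem, ZMod.intCast_zmod_eq_zero_iff_dvd] at this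
    omega
  · intro h
    exact key (γ.1 1 0).natAbs γ rfl h
end

section
/- Let E₂: ℍ → ℂ satisfy E₂(Sτ) = τ²E₂(τ) − 6iτ/π and E₂(Tτ) = E₂(τ). Then the set of γ = (a b; c d) ∈ SL₂(ℤ) for which E₂(γτ) = (cτ+d)²E₂(τ) − 6ic(cτ+d)/π holds for all τ ∈ ℍ is a subgroup of SL₂(ℤ) containing S and T, hence equals SL₂(ℤ). -/
noncomputable section

open Complex Matrix

namespace QuasiAux

open ModularGroup

local notation "SL2Z" => Matrix.SpecialLinearGroup (Fin 2) ℤ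

abbrev CL : Subgroup SL2Z := Subgroup.closure {ModularGroup.S, ModularGroup.T}

lemma S_mem : ModularGroup.S ∈ CL := Subgroup.subset_closure (by simp)
lemma T_mem : ModularGroup.T ∈ CL := Subgroup.subset_closure (by simp)

lemma mem_closure_aux : ∀ (n : ℕ) (g : SL2Z), (g.1 1 0).natAbs = n → g ∈ CL := by
  intro n
  induction n using Nat.strong_induction_on with
  | _ n ih =>
    intro g hg
    have hdet : g.1 0 0 * g.1 1 1 - g.1 0 1 * g.1 1 0 = 1 := by
      have := g.2; rw [Matrix.det_fin_two] at this; linarith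
    rcases eq_or_ne (g.1 1 0) 0 with hc | hc
    · rw [hc, mul_zero, sub_zero] at hdet
      rcases Int.eq_one_or_neg_one_of_mul_eq_one' hdet with ⟨ha, hd⟩ | ⟨ha, hd⟩
      · have : g = T ^ (g.1 0 1) := by
          apply Subtype.ext
          rw [coe_T_zpow]
          ext i j
          fin_cases i <;> fin_cases j <;> simp [ha, hd, hc]
        rw [this]
        exact Subgroup.zpow_mem _ T_mem _
      · have : g = S * S * T ^ (-(g.1 0 1)) := by
          apply Subtype.ext
          have : (S * S * T ^ (-(g.1 0 1))).1 = S.1 * S.1 * (T ^ (-(g.1 0 1))).1 := by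
            simp
          rw [this, coe_T_zpow, coe_S]
          ext i j
          fin_cases i <;> fin_cases j <;>
            simp [Matrix.mul_apply, Fin.sum_univ_succ, ha, hd, hc]
        rw [this]
        exact Subgroup.mul_mem _ (Subgroup.mul_mem _ S_mem S_mem)
          (Subgroup.zpow_mem _ T_mem _)
    · set a := g.1 0 0 with ha
      set c := g.1 1 0 with hcdef
      set q : ℤ := a / c with hq
      have key : (S * T ^ (-q) * g).1 1 0 = a % c := by
        have h1 : (S * T ^ (-q) * g).1 = S.1 * ((T ^ (-q)).1 * g.1) := by
          simp [mul_assoc]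
        rw [h1, coe_T_zpow, coe_S]
        simp [Matrix.mul_apply, Matrix.vecMul, dotProduct, Fin.sum_univ_succ,
          Int.emod_def, ← ha, ← hcdef]
        ring
      have habs : (a % c).natAbs < n := by
        have h1 : 0 ≤ a % c := Int.emod_nonneg a hc
        have h2 : a % c < |c| := by
          rcases lt_or_gt_of_ne hc with h | h
          · rw [abs_of_neg h, ← Int.emod_neg]
            exact Int.emod_lt_of_pos a (by omega)
          · rw [abs_of_pos h]
            exact Int.emod_lt_of_pos a h
        rw [Int.abs_eq_natAbs] at h2
        have : c.natAbs = n := hg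
        omega
      have hmem := ih _ habs (S * T ^ (-q) * g) (by rw [key])
      have : g = (S * T ^ (-q))⁻¹ * (S * T ^ (-q) * g) := by group
      rw [this]
      exact Subgroup.mul_mem _
        (Subgroup.inv_mem _ (Subgroup.mul_mem _ S_mem (Subgroup.zpow_mem _ T_mem _)))
        hmem

lemma mem_closure (g : SL2Z) : g ∈ CL := mem_closure_aux _ g rfl

lemma denom_ne (c d : ℤ) (h : ¬(c = 0 ∧ d = 0)) (τ : ℂ) (hτ : 0 < τ.im) :
    (c : ℂ) * τ + (d : ℂ) ≠ 0 := by
  rcases eq_or_ne c 0 with hc | hc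
  · have hd : d ≠ 0 := fun hd => h ⟨hc, hd⟩
    simp [hc, Int.cast_eq_zero, hd]
  · intro H
    have := congrArg Complex.im H
    simp [Complex.add_im, Complex.mul_im] at this
    rcases this with h' | h'
    · exact hc (by exact_mod_cast h')
    · exact absurd h' (by linarith)

lemma im_pos (a b c d : ℤ) (hdet : a * d - b * c = 1) (τ : ℂ) (hτ : 0 < τ.im) :
    0 < (((a : ℂ) * τ + b) / ((c : ℂ) * τ + d)).im := by
  have hcd : ¬(c = 0 ∧ d = 0) := by rintro ⟨rfl, rfl⟩; simp at hdet
  have hne := denom_ne c d hcd τ hτ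
  have hN : 0 < Complex.normSq ((c : ℂ) * τ + d) := Complex.normSq_pos.2 hne
  have hdetR : (a : ℝ) * d - b * c = 1 := by exact_mod_cast hdet
  have hnum : ((a:ℂ)*τ+b).im * ((c:ℂ)*τ+d).re - ((a:ℂ)*τ+b).re * ((c:ℂ)*τ+d).im = τ.im := by
    simp only [Complex.add_im, Complex.add_re, Complex.mul_im, Complex.mul_re,
      Complex.intCast_im, Complex.intCast_re]
    linear_combination τ.im * hdetR
  rw [Complex.div_im, div_sub_div_same, hnum]
  positivity

lemma det_entries (g : SL2Z) : g.1 0 0 * g.1 1 1 - g.1 0 1 * g.1 1 0 = 1 := by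
  have := g.2; rw [Matrix.det_fin_two] at this; linarith

lemma bottom_pair (g : SL2Z) : ¬(g.1 1 0 = 0 ∧ g.1 1 1 = 0) := by
  rintro ⟨h1, h2⟩
  have := det_entries g
  rw [h1, h2] at this
  simp at this

lemma denom_ne' (g : SL2Z) (τ : ℂ) (hτ : 0 < τ.im) :
    (g.1 1 0 : ℂ) * τ + (g.1 1 1 : ℂ) ≠ 0 :=
  denom_ne _ _ (bottom_pair g) τ hτ

lemma im_pos' (g : SL2Z) (τ : ℂ) (hτ : 0 < τ.im) :
    0 < (((g.1 0 0 : ℂ) * τ + (g.1 0 1 : ℂ)) / ((g.1 1 0 : ℂ) * τ + (g.1 1 1 : ℂ))).im :=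
  im_pos _ _ _ _ (det_entries g) τ hτ

/-- The quasimodularity set. -/
def QSet (E₂ : ℂ → ℂ) : Set SL2Z :=
  {γ : SL2Z | ∀ τ : ℂ, 0 < τ.im →
    E₂ (((γ.1 0 0 : ℂ) * τ + (γ.1 0 1 : ℂ)) / ((γ.1 1 0 : ℂ) * τ + (γ.1 1 1 : ℂ))) =
      ((γ.1 1 0 : ℂ) * τ + (γ.1 1 1 : ℂ)) ^ 2 * E₂ τ -
        6 * Complex.I * (γ.1 1 0 : ℂ) * ((γ.1 1 0 : ℂ) * τ + (γ.1 1 1 : ℂ)) / Real.pi}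

lemma mul_entry (x y : SL2Z) (i j : Fin 2) :
    ((x * y).1 i j : ℂ) = (x.1 i 0 : ℂ) * (y.1 0 j : ℂ) + (x.1 i 1 : ℂ) * (y.1 1 j : ℂ) := by
  have : (x * y).1 = x.1 * y.1 := rfl
  rw [this, Matrix.mul_apply, Fin.sum_univ_succ]
  push_cast
  simp

lemma pi_ne : (Real.pi : ℂ) ≠ 0 := by
  simp [Real.pi_ne_zero]

lemma cocycle_calc (E D2 Dp c1 c2 C : ℂ) (hd2 : D2 ≠ 0)
    (hrel : c2 * Dp + c1 = C * D2) :
    (Dp / D2) ^ 2 * (D2 ^ 2 * E - 6 * Complex.I * c2 * D2 / Real.pi)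
      - 6 * Complex.I * c1 * (Dp / D2) / Real.pi
    = Dp ^ 2 * E - 6 * Complex.I * C * Dp / Real.pi := by
  field_simp [hd2, pi_ne]
  linear_combination (-6 * Complex.I * Dp) * hrel

lemma inv_calc (E Eσ D' c : ℂ) (hD' : D' ≠ 0)
    (h1 : E = (1 / D') ^ 2 * Eσ - 6 * Complex.I * c * (1 / D') / Real.pi) :
    Eσ = D' ^ 2 * E - 6 * Complex.I * (-c) * D' / Real.pi := by
  field_simp [hD', pi_ne] at h1
  have key : (Eσ * Real.pi - D' ^ 2 * E * Real.pi - 6 * Complex.I * c * D') * D' = 0 := by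
    linear_combination (-D') * h1
  rcases mul_eq_zero.1 key with h | h
  · field_simp [pi_ne]
    linear_combination h
  · exact absurd h hD'


lemma one_mem_QSet (E₂ : ℂ → ℂ) : 1 ∈ QSet E₂ := by
  intro τ hτ
  simp

lemma mul_mem_QSet (E₂ : ℂ → ℂ) (x y : SL2Z) (px : x ∈ QSet E₂) (py : y ∈ QSet E₂) :
    x * y ∈ QSet E₂ := by
  intro τ hτ
  have hdet2 : (y.1 0 0 : ℂ) * y.1 1 1 - y.1 0 1 * y.1 1 0 = 1 := by
    exact_mod_cast congrArg (Int.cast : ℤ → ℂ) (det_entries y)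
  set σ : ℂ := ((y.1 0 0 : ℂ) * τ + (y.1 0 1 : ℂ)) / ((y.1 1 0 : ℂ) * τ + (y.1 1 1 : ℂ)) with hσdef
  have hσ : 0 < σ.im := im_pos' y τ hτ
  have hd2 : (y.1 1 0 : ℂ) * τ + (y.1 1 1 : ℂ) ≠ 0 := denom_ne' y τ hτ
  have hdp : ((x * y).1 1 0 : ℂ) * τ + ((x * y).1 1 1 : ℂ) ≠ 0 := denom_ne' (x * y) τ hτ
  have id2 : (x.1 1 0 : ℂ) * σ + (x.1 1 1 : ℂ)
      = (((x * y).1 1 0 : ℂ) * τ + ((x * y).1 1 1 : ℂ)) / ((y.1 1 0 : ℂ) * τ + (y.1 1 1 : ℂ)) := by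
    rw [mul_entry, mul_entry, hσdef]
    have hd2' : τ * (y.1 1 0 : ℂ) + (y.1 1 1 : ℂ) ≠ 0 := by rwa [mul_comm]
    field_simp
    ring
  have hd1 : (x.1 1 0 : ℂ) * σ + (x.1 1 1 : ℂ) ≠ 0 := by
    rw [id2]; exact div_ne_zero hdp hd2
  have id1 : ((x.1 0 0 : ℂ) * σ + (x.1 0 1 : ℂ)) / ((x.1 1 0 : ℂ) * σ + (x.1 1 1 : ℂ))
      = (((x * y).1 0 0 : ℂ) * τ + ((x * y).1 0 1 : ℂ))
        / (((x * y).1 1 0 : ℂ) * τ + ((x * y).1 1 1 : ℂ)) := by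
    rw [div_eq_div_iff hd1 hdp, mul_entry, mul_entry, mul_entry, mul_entry, hσdef]
    have hd2' : τ * (y.1 1 0 : ℂ) + (y.1 1 1 : ℂ) ≠ 0 := by rwa [mul_comm]
    field_simp
    ring
  have h1 := px σ hσ
  have h2 := py τ hτ
  rw [← hσdef] at h2
  have hC := mul_entry x y 1 0
  have hD := mul_entry x y 1 1
  have hrel : (y.1 1 0 : ℂ) * (((x * y).1 1 0 : ℂ) * τ + ((x * y).1 1 1 : ℂ)) + (x.1 1 0 : ℂ)
      = ((x * y).1 1 0 : ℂ) * ((y.1 1 0 : ℂ) * τ + (y.1 1 1 : ℂ)) := by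
    rw [hC, hD]
    linear_combination (-(x.1 1 0 : ℂ)) * hdet2
  rw [← id1, h1, h2, id2]
  exact cocycle_calc (E₂ τ) _ _ _ _ _ hd2 hrel

lemma inv_mem_QSet (E₂ : ℂ → ℂ) (x : SL2Z) (px : x ∈ QSet E₂) : x⁻¹ ∈ QSet E₂ := by
  intro τ hτ
  have hdetZ := det_entries x
  have hdetC : (x.1 0 0 : ℂ) * x.1 1 1 - x.1 0 1 * x.1 1 0 = 1 := by
    exact_mod_cast congrArg (Int.cast : ℤ → ℂ) hdetZ
  have hA : ((x⁻¹).1 0 0 : ℂ) = (x.1 1 1 : ℂ) := by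
    rw [Matrix.SpecialLinearGroup.SL2_inv_expl]; simp
  have hB : ((x⁻¹).1 0 1 : ℂ) = -(x.1 0 1 : ℂ) := by
    rw [Matrix.SpecialLinearGroup.SL2_inv_expl]; simp
  have hC : ((x⁻¹).1 1 0 : ℂ) = -(x.1 1 0 : ℂ) := by
    rw [Matrix.SpecialLinearGroup.SL2_inv_expl]; simp
  have hD : ((x⁻¹).1 1 1 : ℂ) = (x.1 0 0 : ℂ) := by
    rw [Matrix.SpecialLinearGroup.SL2_inv_expl]; simp
  have hD' : (-(x.1 1 0 : ℂ)) * τ + (x.1 0 0 : ℂ) ≠ 0 := by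
    have := denom_ne' x⁻¹ τ hτ
    rwa [hC, hD] at this
  have hD2 : -((x.1 1 0 : ℂ) * τ) + (x.1 0 0 : ℂ) ≠ 0 := by rwa [neg_mul] at hD'
  set σ : ℂ := ((x.1 1 1 : ℂ) * τ + -(x.1 0 1 : ℂ)) / ((-(x.1 1 0 : ℂ)) * τ + (x.1 0 0 : ℂ))
    with hσdef
  have hσ : 0 < σ.im := by
    have := im_pos' x⁻¹ τ hτ
    rwa [hA, hB, hC, hD] at this
  have hd1 : (x.1 1 0 : ℂ) * σ + (x.1 1 1 : ℂ) ≠ 0 := by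
    rw [hσdef]
    have : (x.1 1 0 : ℂ) * (((x.1 1 1 : ℂ) * τ + -(x.1 0 1 : ℂ))
        / ((-(x.1 1 0 : ℂ)) * τ + (x.1 0 0 : ℂ))) + (x.1 1 1 : ℂ)
        = 1 / ((-(x.1 1 0 : ℂ)) * τ + (x.1 0 0 : ℂ)) := by
      field_simp [hD', hD2]
      linear_combination hdetC
    rw [this]
    exact div_ne_zero one_ne_zero hD'
  have id4 : (x.1 1 0 : ℂ) * σ + (x.1 1 1 : ℂ)
      = 1 / ((-(x.1 1 0 : ℂ)) * τ + (x.1 0 0 : ℂ)) := by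
    rw [hσdef]
    field_simp [hD', hD2]
    linear_combination hdetC
  have id3 : ((x.1 0 0 : ℂ) * σ + (x.1 0 1 : ℂ)) / ((x.1 1 0 : ℂ) * σ + (x.1 1 1 : ℂ)) = τ := by
    rw [eq_comm, eq_div_iff hd1, id4, hσdef]
    have hD3 : -(τ * (x.1 1 0 : ℂ)) + (x.1 0 0 : ℂ) ≠ 0 := by rwa [mul_comm]
    field_simp [hD', hD2]
    linear_combination (-τ) * hdetC
  have h1 := px σ hσ
  rw [id3, id4] at h1
  show E₂ ((((x⁻¹).1 0 0 : ℂ) * τ + ((x⁻¹).1 0 1 : ℂ)) / (((x⁻¹).1 1 0 : ℂ) * τ + ((x⁻¹).1 1 1 : ℂ)))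
      = (((x⁻¹).1 1 0 : ℂ) * τ + ((x⁻¹).1 1 1 : ℂ)) ^ 2 * E₂ τ -
        6 * Complex.I * ((x⁻¹).1 1 0 : ℂ) * (((x⁻¹).1 1 0 : ℂ) * τ + ((x⁻¹).1 1 1 : ℂ)) / Real.pi
  rw [hA, hB, hC, hD, ← hσdef]
  exact inv_calc (E₂ τ) (E₂ σ) _ _ hD' h1

lemma S_mem_QSet (E₂ : ℂ → ℂ)
    (hS : ∀ τ : ℂ, 0 < τ.im →
      E₂ (-1 / τ) = τ ^ 2 * E₂ τ - 6 * Complex.I * τ / Real.pi) :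
    ModularGroup.S ∈ QSet E₂ := by
  intro τ hτ
  simpa [ModularGroup.S] using hS τ hτ

lemma T_mem_QSet (E₂ : ℂ → ℂ)
    (hT : ∀ τ : ℂ, 0 < τ.im → E₂ (τ + 1) = E₂ τ) :
    ModularGroup.T ∈ QSet E₂ := by
  intro τ hτ
  simpa [ModularGroup.T] using hT τ hτ

lemma QSet_eq_univ (E₂ : ℂ → ℂ)
    (hS : ∀ τ : ℂ, 0 < τ.im →
      E₂ (-1 / τ) = τ ^ 2 * E₂ τ - 6 * Complex.I * τ / Real.pi)
    (hT : ∀ τ : ℂ, 0 < τ.im → E₂ (τ + 1) = E₂ τ) :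
    QSet E₂ = Set.univ := by
  apply Set.eq_univ_of_forall
  intro γ
  refine Subgroup.closure_induction ?_ ?_ ?_ ?_ (mem_closure γ)
  · intro g hg
    simp only [Set.mem_insert_iff, Set.mem_singleton_iff] at hg
    rcases hg with rfl | rfl
    · exact S_mem_QSet E₂ hS
    · exact T_mem_QSet E₂ hT
  · exact one_mem_QSet E₂
  · intro a b _ _ pa pb
    exact mul_mem_QSet E₂ a b pa pb
  · intro a _ pa
    exact inv_mem_QSet E₂ a pa

end QuasiAux

/-- The set of `γ ∈ SL₂(ℤ)` for which the quasimodular transformation law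
`E₂(γτ) = (cτ+d)² E₂(τ) − 6ic(cτ+d)/π` holds for all `τ ∈ ℍ` equals all of `SL₂(ℤ)`,
provided the law holds for the generators `S` and `T` (i.e. provided
`E₂(−1/τ) = τ²E₂(τ) − 6iτ/π` and `E₂(τ+1) = E₂(τ)`). -/
theorem eisenstein_quasimodular_set_eq_univ (E₂ : ℂ → ℂ)
    (hS : ∀ τ : ℂ, 0 < τ.im →
      E₂ (-1 / τ) = τ ^ 2 * E₂ τ - 6 * Complex.I * τ / Real.pi)
    (hT : ∀ τ : ℂ, 0 < τ.im → E₂ (τ + 1) = E₂ τ) :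
    {γ : Matrix.SpecialLinearGroup (Fin 2) ℤ | ∀ τ : ℂ, 0 < τ.im →
      E₂ (((γ.1 0 0 : ℂ) * τ + (γ.1 0 1 : ℂ)) / ((γ.1 1 0 : ℂ) * τ + (γ.1 1 1 : ℂ))) =
        ((γ.1 1 0 : ℂ) * τ + (γ.1 1 1 : ℂ)) ^ 2 * E₂ τ -
          6 * Complex.I * (γ.1 1 0 : ℂ) * ((γ.1 1 0 : ℂ) * τ + (γ.1 1 1 : ℂ)) / Real.pi} =
      Set.univ :=
  QuasiAux.QSet_eq_univ E₂ hS hT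
end
end
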